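/- (Appendix A, active total-power constraint) Let N ≥ 1, i_n > 0, α_n < 0, P_n > 0 for n = 1,…,N, P > 0, and let μ > 0. Define p(μ)_n = min(max(1/(ln 2 · (μ − α_n)) − i_n, 0), P_n), and suppose ∑_{n=1}^N p(μ)_n = P. Then p(μ) maximizes f(p) = ∑_{n=1}^N [log₂(1 + p_n/i_n) + α_n p_n] over the feasible set {p ∈ ℝ^N : 0 ≤ p_n ≤ P_n for all n, and ∑_{n=1}^N p_n ≤ P}. -/

import Mathlib

/-!
Weak duality for the Lagrangian relaxation of the total-power constraint. For each subcarrier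
the map x ↦ log₂(1 + x/iₙ) − (μ − αₙ) x is concave, with stationary point
1/(ln 2 · (μ − αₙ)) − iₙ, so its maximum over [0, Pₙ] is attained at the clamped stationary
point p(μ)ₙ. Summing, p(μ) maximizes f(p) − μ ∑ pₙ over the box, and since it spends exactly
the budget P while any feasible p spends at most P, it also maximizes f.
-/

open Real Finset

theorem Real.log_sub_log_le_div {x y : ℝ} (hx : 0 < x) (hy : 0 < y) :
    log x - log y ≤ (x - y) / y := by
  have h := log_le_sub_one_of_pos (div_pos hx hy)
  rwa [log_div hx.ne' hy.ne', div_sub_one hy.ne'] at h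

/-- The first-order optimality condition of the clamped stationary point `t - i` on `[0, b]`
for a concave function with derivative `y ↦ 1 / (i + y) - 1 / t`. -/
theorem sub_clamp_div_add_clamp_le {i t b x : ℝ} (hi : 0 < i) (ht : 0 < t) (hx0 : 0 ≤ x)
    (hxb : x ≤ b) :
    (x - min (max (t - i) 0) b) / (i + min (max (t - i) 0) b)
      ≤ (x - min (max (t - i) 0) b) / t := by
  rcases le_or_gt b (t - i) with hbt | htb
  · have hq : min (max (t - i) 0) b = b := by
      rw [max_eq_left (by linarith), min_eq_right hbt]
    rw [hq]
    have h := div_le_div_of_nonneg_left (sub_nonneg.2 hxb) (by linarith : 0 < i + b)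
      (by linarith : i + b ≤ t)
    rwa [← neg_sub, neg_div, neg_div, neg_le_neg_iff]
  rcases le_or_gt (t - i) 0 with hti | hti
  · have hq : min (max (t - i) 0) b = 0 := by
      rw [max_eq_right hti, min_eq_left (hx0.trans hxb)]
    rw [hq, add_zero, sub_zero]
    exact div_le_div_of_nonneg_left hx0 ht (by linarith)
  · have hq : min (max (t - i) 0) b = t - i := by
      rw [max_eq_left hti.le, min_eq_left htb.le]
    rw [hq, add_sub_cancel]

theorem logb_one_add_div_sub_mul_le_clamp {i c b x : ℝ} (hi : 0 < i) (hc : 0 < c) (hx0 : 0 ≤ x)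
    (hxb : x ≤ b) :
    logb 2 (1 + x / i) - c * x
      ≤ logb 2 (1 + min (max (1 / (log 2 * c) - i) 0) b / i)
        - c * min (max (1 / (log 2 * c) - i) 0) b := by
  set q := min (max (1 / (log 2 * c) - i) 0) b
  have hlog2 : 0 < log 2 := log_pos one_lt_two
  have hq0 : 0 ≤ q := le_min (le_max_right _ _) (hx0.trans hxb)
  have hlogb : ∀ y, 0 ≤ y → logb 2 (1 + y / i) = (log (i + y) - log i) / log 2 := by
    intro y hy
    rw [logb, one_add_div hi.ne', log_div (by linarith) hi.ne']
  have key : log (i + x) - log (i + q) ≤ log 2 * (c * (x - q)) :=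
    calc log (i + x) - log (i + q)
        ≤ (i + x - (i + q)) / (i + q) := log_sub_log_le_div (by linarith) (by linarith)
      _ = (x - q) / (i + q) := by ring_nf
      _ ≤ (x - q) / (1 / (log 2 * c)) := sub_clamp_div_add_clamp_le hi (by positivity) hx0 hxb
      _ = log 2 * (c * (x - q)) := by field_simp
  rw [hlogb x hx0, hlogb q hq0, ← sub_nonneg]
  have hdiff : (log (i + q) - log i) / log 2 - c * q - ((log (i + x) - log i) / log 2 - c * x)
      = (log 2 * (c * (x - q)) - (log (i + x) - log (i + q))) / log 2 := by
    field_simp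
    ring
  rw [hdiff]
  exact div_nonneg (by linarith) hlog2.le

theorem Finset.sum_le_sum_of_lagrangian_le {ι : Type*} (s : Finset ι) (f : ι → ℝ → ℝ)
    {μ P : ℝ} (hμ : 0 ≤ μ) {p q : ι → ℝ} (hp : ∑ n ∈ s, p n ≤ P) (hq : ∑ n ∈ s, q n = P)
    (hle : ∀ n ∈ s, f n (p n) - μ * p n ≤ f n (q n) - μ * q n) :
    ∑ n ∈ s, f n (p n) ≤ ∑ n ∈ s, f n (q n) := by
  have hsum := sum_le_sum hle
  simp only [sum_sub_distrib, ← mul_sum, hq] at hsum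
  nlinarith [mul_le_mul_of_nonneg_left hp hμ]

theorem ADRMP_solution_active_constraint_general (N : ℕ)
    (i : Fin N → ℝ) (hi : ∀ n, 0 < i n)
    (α : Fin N → ℝ) (hα : ∀ n, α n < 0)
    (Pmask : Fin N → ℝ)
    (P : ℝ)
    (μ : ℝ) (hμ : 0 < μ)
    (pμ : Fin N → ℝ)
    (hpμ : ∀ n, pμ n
      = min (max (1 / (Real.log 2 * (μ - α n)) - i n) 0) (Pmask n))
    (hsum : ∑ n, pμ n = P) :
    ∀ p : Fin N → ℝ, (∀ n, 0 ≤ p n ∧ p n ≤ Pmask n) → (∑ n, p n ≤ P) →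
      ∑ n, (Real.logb 2 (1 + p n / i n) + α n * p n)
        ≤ ∑ n, (Real.logb 2 (1 + pμ n / i n) + α n * pμ n) := by
  intro p hp hple
  refine sum_le_sum_of_lagrangian_le univ (fun n x => logb 2 (1 + x / i n) + α n * x) hμ.le
    hple hsum fun n _ => ?_
  have h := logb_one_add_div_sub_mul_le_clamp (hi n) (sub_pos.2 ((hα n).trans hμ))
    (hp n).1 (hp n).2
  rw [← hpμ n] at h
  linarith

/-- Appendix A, active total-power constraint (μ > 0): if the clamped power
allocation p(μ)ₙ = [1/(ln 2 · (μ − αₙ)) − iₙ]₀^{Pₙ} uses exactly the total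
power budget P, then it maximizes the ADRMP objective over the feasible set. -/
theorem ADRMP_solution_active_constraint (N : ℕ) (hN : 1 ≤ N)
    (i : Fin N → ℝ) (hi : ∀ n, 0 < i n)
    (α : Fin N → ℝ) (hα : ∀ n, α n < 0)
    (Pmask : Fin N → ℝ) (hPmask : ∀ n, 0 < Pmask n)
    (P : ℝ) (hP : 0 < P)
    (μ : ℝ) (hμ : 0 < μ)
    (pμ : Fin N → ℝ)
    (hpμ : ∀ n, pμ n
      = min (max (1 / (Real.log 2 * (μ - α n)) - i n) 0) (Pmask n))
    (hsum : ∑ n, pμ n = P) :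
    ∀ p : Fin N → ℝ, (∀ n, 0 ≤ p n ∧ p n ≤ Pmask n) → (∑ n, p n ≤ P) →
      ∑ n, (Real.logb 2 (1 + p n / i n) + α n * p n)
        ≤ ∑ n, (Real.logb 2 (1 + pμ n / i n) + α n * pμ n) :=
  ADRMP_solution_active_constraint_general N i hi α hα Pmask P μ hμ pμ hpμ hsum
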